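/- (Orbits of the optimal isotropy group in Case 6) Let α₀ ∈ ℝ³, α₀ ≠ 0, and let G = {(A,a) ∈ SE(3) : Aα₀ = α₀}. For every (q¹,q²,p¹,p²) ∈ J⁻¹(α₀,0) one has p¹ ≠ 0, and two points (q¹,q²,p¹,−p¹) and (q̃¹,q̃²,p̃¹,−p̃¹) of J⁻¹(α₀,0) lie in the same G-orbit if and only if |p¹| = |p̃¹| and ⟨q¹−q², p¹⟩/|p¹|² = ⟨q̃¹−q̃², p̃¹⟩/|p̃¹|². -/

import Mathlib

open Matrix

/-- Vectors in ℝ³. -/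
abbrev V3 : Type := Fin 3 → ℝ

/-- The two-body phase space M = ℝ³ × ℝ³ × ℝ³ × ℝ³, points (q¹, q², p¹, p²). -/
abbrev M2B : Type := V3 × V3 × V3 × V3

/-- A 3×3 real matrix is special orthogonal. -/
def SO3 (A : Matrix (Fin 3) (Fin 3) ℝ) : Prop := Aᵀ * A = 1 ∧ A.det = 1

/-- The action of (A, a) ∈ SE(3) on the phase space:
(A,a)·(q¹,q²,p¹,p²) = (Aq¹+a, Aq²+a, Ap¹, Ap²). -/
def act (A : Matrix (Fin 3) (Fin 3) ℝ) (a : V3) (m : M2B) : M2B :=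
  (A *ᵥ m.1 + a, A *ᵥ m.2.1 + a, A *ᵥ m.2.2.1, A *ᵥ m.2.2.2)

/-- The isotropy subgroup SE(3)_{(q,p)} of a point of M, as a set of pairs (A,a)
with A special orthogonal. -/
def isotropy (m : M2B) : Set (Matrix (Fin 3) (Fin 3) ℝ × V3) :=
  {g | SO3 g.1 ∧ act g.1 g.2 m = m}

/-- The momentum map J(q¹,q²,p¹,p²) = (q¹×p¹ + q²×p², p¹+p²). -/
def Jmom (m : M2B) : V3 × V3 :=
  (m.1 ⨯₃ m.2.2.1 + m.2.1 ⨯₃ m.2.2.2, m.2.2.1 + m.2.2.2)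

/-- G¹(x) = {(A,a) ∈ SE(3) : a = x − Ax}. -/
def G1 (x : V3) : Set (Matrix (Fin 3) (Fin 3) ℝ × V3) :=
  {g | SO3 g.1 ∧ g.2 = x - g.1 *ᵥ x}

/-- G²(y) = {(A,0) ∈ SE(3) : Ay = y}. -/
def G2 (y : V3) : Set (Matrix (Fin 3) (Fin 3) ℝ × V3) :=
  {g | SO3 g.1 ∧ g.1 *ᵥ y = y ∧ g.2 = 0}

/-- G³(x,y) = {(A,a) ∈ SE(3) : Ay = y and a = x − Ax}. -/
def G3 (x y : V3) : Set (Matrix (Fin 3) (Fin 3) ℝ × V3) :=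
  {g | SO3 g.1 ∧ g.1 *ᵥ y = y ∧ g.2 = x - g.1 *ᵥ x}

/-- G⁴ = {(I, 0)}, the trivial subgroup. -/
def G4 : Set (Matrix (Fin 3) (Fin 3) ℝ × V3) := {((1 : Matrix (Fin 3) (Fin 3) ℝ), (0 : V3))}

/-! On `J⁻¹(α₀, 0)` one has `p² = -p¹` and `r × p = α₀` for `r = q¹ - q²`, `p = p¹`. By Lagrange's
identity `|r × p|² = |r|²|p|² - ⟨r, p⟩²`, the invariants `|p|` and `⟨r, p⟩` then determine the whole
Gram matrix of `(r, p)`. Two pairs with the same Gram matrix and nonzero cross product are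
related by the rotation taking the frame `(r, p, r × p)` to `(r', p', r' × p')`; it fixes
`α₀ = r × p = r' × p'`, and a translation then matches `q¹`. -/

lemma cross_dot_cross_self (u v : V3) :
    (u ⨯₃ v) ⬝ᵥ (u ⨯₃ v) = (u ⬝ᵥ u) * (v ⬝ᵥ v) - (u ⬝ᵥ v) ^ 2 := by
  rw [cross_dot_cross, dotProduct_comm v u]; ring

lemma dotProduct_self_eq_of_cross_eq {r p r' p' : V3} (hcross : r ⨯₃ p = r' ⨯₃ p')
    (hp₀ : p ⬝ᵥ p ≠ 0) (hp : p ⬝ᵥ p = p' ⬝ᵥ p') (hrp : r ⬝ᵥ p = r' ⬝ᵥ p') :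
    r ⬝ᵥ r = r' ⬝ᵥ r' := by
  have h := cross_dot_cross_self r p
  rw [hcross, cross_dot_cross_self, ← hp, ← hrp] at h
  exact (mul_right_cancel₀ hp₀ (sub_left_injective h)).symm

lemma dotProduct_mulVec_mulVec_of_transpose_mul_self {A : Matrix (Fin 3) (Fin 3) ℝ}
    (hA : Aᵀ * A = 1) (u v : V3) : (A *ᵥ u) ⬝ᵥ (A *ᵥ v) = u ⬝ᵥ v := by
  rw [dotProduct_mulVec, ← mulVec_transpose, mulVec_mulVec, hA, one_mulVec]

def crossFrame (u v : V3) : Matrix (Fin 3) (Fin 3) ℝ := ![u, v, u ⨯₃ v]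

lemma det_crossFrame (u v : V3) : (crossFrame u v).det = (u ⨯₃ v) ⬝ᵥ (u ⨯₃ v) := by
  rw [crossFrame, ← triple_product_eq_det, triple_product_permutation,
    triple_product_permutation]

lemma crossFrame_mul_transpose_eq {u v u' v' : V3} (hu : u ⬝ᵥ u = u' ⬝ᵥ u')
    (hv : v ⬝ᵥ v = v' ⬝ᵥ v') (huv : u ⬝ᵥ v = u' ⬝ᵥ v') :
    crossFrame u v * (crossFrame u v)ᵀ = crossFrame u' v' * (crossFrame u' v')ᵀ := by
  have gram (R : Matrix (Fin 3) (Fin 3) ℝ) (i j : Fin 3) : (R * Rᵀ) i j = R i ⬝ᵥ R j := rfl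
  ext i j
  rw [gram, gram]
  fin_cases i <;> fin_cases j <;>
    simp [crossFrame, dot_self_cross, dot_cross_self, cross_dot_cross_self,
      dotProduct_comm (u ⨯₃ v), dotProduct_comm (u' ⨯₃ v'), dotProduct_comm v u,
      dotProduct_comm v' u', hu, hv, huv]

theorem exists_SO3_mulVec_eq_of_dotProduct_eq {u v u' v' : V3} (huv₀ : u ⨯₃ v ≠ 0)
    (hu : u ⬝ᵥ u = u' ⬝ᵥ u') (hv : v ⬝ᵥ v = v' ⬝ᵥ v') (huv : u ⬝ᵥ v = u' ⬝ᵥ v') :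
    ∃ A, SO3 A ∧ A *ᵥ u = u' ∧ A *ᵥ v = v' ∧ A *ᵥ (u ⨯₃ v) = u' ⨯₃ v' := by
  set R := crossFrame u v
  set R' := crossFrame u' v'
  have hR : IsUnit R.det := by
    rw [isUnit_iff_ne_zero, det_crossFrame]
    exact fun h => huv₀ (dotProduct_self_eq_zero.mp h)
  have hdet : R'.det = R.det := by
    simp only [R, R', det_crossFrame, cross_dot_cross_self, hu, hv, huv]
  -- `R * B = R'` says that `Bᵀ` maps the rows of `R` to those of `R'`.
  set B := R⁻¹ * R'
  have hRB : R * B = R' := by rw [← Matrix.mul_assoc, mul_nonsing_inv R hR, Matrix.one_mul]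
  have row (i : Fin 3) : Bᵀ *ᵥ R i = R' i := by
    rw [← hRB, ← vecMul_transpose, transpose_transpose]; rfl
  refine ⟨Bᵀ, ⟨?_, ?_⟩, row 0, row 1, row 2⟩
  · rw [transpose_transpose, transpose_mul, ← Matrix.mul_assoc, Matrix.mul_assoc R⁻¹,
      ← crossFrame_mul_transpose_eq hu hv huv, ← Matrix.mul_assoc, nonsing_inv_mul R hR,
      Matrix.one_mul, ← transpose_mul, nonsing_inv_mul R hR, transpose_one]
  · rw [det_transpose, det_mul, det_nonsing_inv, hdet, Ring.inverse_mul_cancel _ hR]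

lemma Jmom_eq_iff (q1 q2 p1 p2 α : V3) :
    Jmom (q1, q2, p1, p2) = (α, 0) ↔ p2 = -p1 ∧ (q1 - q2) ⨯₃ p1 = α := by
  simp only [Jmom, Prod.mk.injEq, add_eq_zero_iff_eq_neg']
  constructor
  · rintro ⟨h, rfl⟩
    simpa [sub_eq_add_neg] using h
  · rintro ⟨rfl, h⟩
    simpa [sub_eq_add_neg] using h

lemma dotProduct_eq_of_act_eq {A : Matrix (Fin 3) (Fin 3) ℝ} (hA : Aᵀ * A = 1)
    {a q1 q2 p1 p2 q1' q2' p1' p2' : V3} (hact : act A a (q1, q2, p1, p2) = (q1', q2', p1', p2')) :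
    p1' ⬝ᵥ p1' = p1 ⬝ᵥ p1 ∧ (q1' - q2') ⬝ᵥ p1' = (q1 - q2) ⬝ᵥ p1 := by
  simp only [act, Prod.mk.injEq] at hact
  obtain ⟨rfl, rfl, rfl, -⟩ := hact
  have hr : A *ᵥ q1 + a - (A *ᵥ q2 + a) = A *ᵥ (q1 - q2) := by rw [mulVec_sub]; abel
  simp only [hr, dotProduct_mulVec_mulVec_of_transpose_mul_self hA, and_self]

lemma exists_act_eq_of_dotProduct_eq {q1 q2 p q1' q2' p' : V3}
    (hcross : (q1 - q2) ⨯₃ p = (q1' - q2') ⨯₃ p') (hcross₀ : (q1 - q2) ⨯₃ p ≠ 0)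
    (hp : p ⬝ᵥ p = p' ⬝ᵥ p') (hrp : (q1 - q2) ⬝ᵥ p = (q1' - q2') ⬝ᵥ p') :
    ∃ A a, SO3 A ∧ A *ᵥ ((q1 - q2) ⨯₃ p) = (q1 - q2) ⨯₃ p ∧
      act A a (q1, q2, p, -p) = (q1', q2', p', -p') := by
  have hp₀ : p ⬝ᵥ p ≠ 0 := fun h => hcross₀ (by rw [dotProduct_self_eq_zero.mp h, map_zero])
  obtain ⟨A, hA, hAr, hAp, hAcross⟩ := exists_SO3_mulVec_eq_of_dotProduct_eq hcross₀
    (dotProduct_self_eq_of_cross_eq hcross hp₀ hp hrp) hp hrp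
  refine ⟨A, q1' - A *ᵥ q1, hA, hAcross.trans hcross.symm, ?_⟩
  simp only [act, Prod.mk.injEq, mulVec_neg, hAp, and_true]
  rw [mulVec_sub] at hAr
  refine ⟨add_sub_cancel _ _, ?_⟩
  rw [← sub_sub_cancel q1' q2', ← hAr]
  abel

theorem stmt13 (a0 : V3) (ha : a0 ≠ 0) :
    (∀ m : M2B, Jmom m = (a0, 0) → m.2.2.1 ≠ 0) ∧
    ∀ q1 q2 p1 q1' q2' p1' : V3,
      Jmom (q1, q2, p1, -p1) = (a0, 0) → Jmom (q1', q2', p1', -p1') = (a0, 0) →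
      ((∃ (A : Matrix (Fin 3) (Fin 3) ℝ) (a : V3), SO3 A ∧ A *ᵥ a0 = a0 ∧
          act A a (q1, q2, p1, -p1) = (q1', q2', p1', -p1')) ↔
        (Real.sqrt (p1 ⬝ᵥ p1) = Real.sqrt (p1' ⬝ᵥ p1') ∧
         (q1 - q2) ⬝ᵥ p1 / (p1 ⬝ᵥ p1) = (q1' - q2') ⬝ᵥ p1' / (p1' ⬝ᵥ p1'))) := by
  have momentum_ne_zero {r p : V3} (h : r ⨯₃ p = a0) : p ≠ 0 := by
    rintro rfl
    exact ha (h ▸ map_zero _)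
  refine ⟨fun ⟨q1, q2, p1, p2⟩ hJ => momentum_ne_zero ((Jmom_eq_iff ..).mp hJ).2,
    fun q1 q2 p1 q1' q2' p1' hJ hJ' => ?_⟩
  obtain ⟨-, hJ⟩ := (Jmom_eq_iff ..).mp hJ
  obtain ⟨-, hJ'⟩ := (Jmom_eq_iff ..).mp hJ'
  have hp₀ : p1 ⬝ᵥ p1 ≠ 0 := dotProduct_self_eq_zero.not.mpr (momentum_ne_zero hJ)
  constructor
  · rintro ⟨A, a, ⟨hA, -⟩, -, hact⟩
    obtain ⟨hp, hrp⟩ := dotProduct_eq_of_act_eq hA hact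
    rw [hp, hrp]
    exact ⟨rfl, rfl⟩
  · rintro ⟨hp, hrp⟩
    have hp : p1 ⬝ᵥ p1 = p1' ⬝ᵥ p1' :=
      (Real.sqrt_inj (dotProduct_self_star_nonneg _) (dotProduct_self_star_nonneg _)).mp hp
    rw [← hp, div_left_inj' hp₀] at hrp
    simpa only [hJ] using
      exists_act_eq_of_dotProduct_eq (hJ.trans hJ'.symm) (hJ ▸ ha) hp hrp
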